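/- For every integer k ≥ 4 there exist k(k+1) points in the closed unit square [0,1]² whose pairwise distances are all at least (k² + 1) / (k·(k² − k + √(2k))). -/

import Mathlib

/-!
Place `k + 1` columns of `k` points, at spacing `1 / k` horizontally and `m` vertically, with the odd
columns shifted up by `m sin α`. Two points of one column are `≥ m` apart, two points of adjacent
columns are at distance `≥ m √(cos² α + sin² α) = m` because `sin α ≤ 1/2`, and farther columns are
`2 m cos α ≥ m` apart. The angle is chosen so that the pattern fills the square exactly in both
directions: `m k cos α = 1 = m (k - 1 + sin α)`.
-/

open Real Set

noncomputable def cosAlpha (k : ℝ) : ℝ := (k ^ 2 - k + √(2 * k)) / (k ^ 2 + 1)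

noncomputable def sinAlpha (k : ℝ) : ℝ := (k * √(2 * k) - k + 1) / (k ^ 2 + 1)

section Alpha

variable {k : ℝ}

theorem cosAlpha_sq_add_sinAlpha_sq (hk : 0 ≤ k) : cosAlpha k ^ 2 + sinAlpha k ^ 2 = 1 := by
  have hr : √(2 * k) ^ 2 = 2 * k := sq_sqrt (by positivity)
  rw [cosAlpha, sinAlpha, div_pow, div_pow, ← add_div, div_eq_one_iff_eq (by positivity)]
  linear_combination (k ^ 2 + 1) * hr

theorem mul_cosAlpha (k : ℝ) : k * cosAlpha k = k - 1 + sinAlpha k := by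
  rw [cosAlpha, sinAlpha]
  field_simp
  ring

theorem one_half_le_cosAlpha (hk : 1 ≤ k) : 1 / 2 ≤ cosAlpha k := by
  have hr : 1 ≤ √(2 * k) := one_le_sqrt.mpr (by linarith)
  rw [cosAlpha, le_div_iff₀ (by positivity)]
  nlinarith

theorem sinAlpha_nonneg (hk : 1 ≤ k) : 0 ≤ sinAlpha k := by
  have hr : 1 ≤ √(2 * k) := one_le_sqrt.mpr (by linarith)
  unfold sinAlpha
  apply div_nonneg _ (by positivity)
  nlinarith

-- This is where `k ≥ 4` is needed: it amounts to `8 k³ ≤ (k² + 2k - 1)²`, which fails for `k = 3`.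
theorem sinAlpha_le_one_half (hk : 4 ≤ k) : sinAlpha k ≤ 1 / 2 := by
  have hr : √(2 * k) ^ 2 = 2 * k := sq_sqrt (by positivity)
  have hr0 : 0 ≤ √(2 * k) := sqrt_nonneg _
  rw [sinAlpha, div_le_iff₀ (by positivity)]
  have hcube : 8 * k ^ 3 ≤ (k ^ 2 + 2 * k - 1) ^ 2 := by nlinarith
  nlinarith [sq_nonneg (2 * k * √(2 * k) - (k ^ 2 + 2 * k - 1))]

end Alpha

theorem sq_le_sq_intCast_add {t : ℝ} (ht : |t| ≤ 1 / 2) (n : ℤ) : t ^ 2 ≤ (n + t) ^ 2 := by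
  rcases eq_or_ne n 0 with rfl | hn
  · simp
  · have hn1 : (1 : ℝ) ≤ |(n : ℝ)| := by exact_mod_cast Int.one_le_abs hn
    have htri : |(n : ℝ)| ≤ |n + t| + |t| := by simpa using abs_sub (n + t : ℝ) t
    exact sq_le_sq.mpr (by linarith)

noncomputable def staggeredPoint (c s : ℝ) (i j : ℕ) : EuclideanSpace ℝ (Fin 2) :=
  !₂[j * c, i + (j % 2 : ℕ) * s]

section Staggered

variable {c s : ℝ}

theorem dist_staggeredPoint (i j i' j' : ℕ) :
    dist (staggeredPoint c s i j) (staggeredPoint c s i' j') =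
      √(((j : ℝ) - j') ^ 2 * c ^ 2 + ((i : ℝ) - i' + ((j % 2 : ℕ) - (j' % 2 : ℕ)) * s) ^ 2) := by
  rw [EuclideanSpace.dist_eq, Fin.sum_univ_two]
  simp only [staggeredPoint, Real.dist_eq, sq_abs]
  congr 1
  simp
  ring

theorem one_le_dist_staggeredPoint (hcs : c ^ 2 + s ^ 2 = 1) (hc : 1 / 2 ≤ c) (hs0 : 0 ≤ s)
    (hs : s ≤ 1 / 2) {i j i' j' : ℕ} (hne : (i, j) ≠ (i', j')) :
    1 ≤ dist (staggeredPoint c s i j) (staggeredPoint c s i' j') := by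
  rw [dist_staggeredPoint, one_le_sqrt]
  have hrow : (i : ℝ) - i' = ((i - i' : ℤ) : ℝ) := by push_cast; ring
  rw [hrow]
  obtain rfl | hadj | hfar :
      j = j' ∨ (((j : ℝ) - j') ^ 2 = 1 ∧ |(((j % 2 : ℕ) : ℝ) - (j' % 2 : ℕ)) * s| = s) ∨
        4 ≤ ((j : ℝ) - j') ^ 2 := by
    rcases (by omega : j = j' ∨ (j + 1 = j' ∨ j' + 1 = j) ∨ (j + 2 ≤ j' ∨ j' + 2 ≤ j))
      with h | hj | hj
    · exact .inl h
    · have hp : j % 2 + 1 = j' % 2 ∨ j' % 2 + 1 = j % 2 := by omega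
      refine .inr (.inl ⟨?_, ?_⟩)
      · rcases hj with hj | hj <;> rw [← hj] <;> push_cast <;> ring
      · rcases hp with hp | hp <;> rw [← hp] <;> push_cast <;> simp [abs_of_nonneg hs0]
    · refine .inr (.inr ?_)
      rcases hj with hj | hj
      · have : (j : ℝ) + 2 ≤ j' := by exact_mod_cast hj
        nlinarith
      · have : (j' : ℝ) + 2 ≤ j := by exact_mod_cast hj
        nlinarith
  · have hi : (i : ℤ) - i' ≠ 0 := by
      intro h
      exact hne (by rw [show i = i' by omega])
    have hrow1 : (1 : ℝ) ≤ ((i - i' : ℤ) : ℝ) ^ 2 := by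
      exact_mod_cast (one_le_sq_iff_one_le_abs _).mpr (Int.one_le_abs hi)
    simpa using hrow1
  · obtain ⟨hj, hshift⟩ := hadj
    have := sq_le_sq_intCast_add (hshift.trans_le hs) (i - i')
    rw [← sq_abs, hshift] at this
    nlinarith
  · nlinarith

theorem smul_staggeredPoint_mem_Icc {m : ℝ} (hm : 0 ≤ m) (hc : 0 ≤ c) (hs : 0 ≤ s)
    {a b i j : ℕ} (hi : i < a) (hj : j ≤ b) (hwidth : m * (b * c) ≤ 1)
    (hheight : m * (a - 1 + s) ≤ 1) (t : Fin 2) :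
    (m • staggeredPoint c s i j) t ∈ Icc 0 1 := by
  have hjb : (j : ℝ) ≤ b := by exact_mod_cast hj
  have hia : (i : ℝ) ≤ a - 1 := by
    rw [le_sub_iff_add_le]; exact_mod_cast hi
  have hpar : ((j % 2 : ℕ) : ℝ) ≤ 1 := by exact_mod_cast Nat.le_of_lt_succ (Nat.mod_lt j two_pos)
  fin_cases t <;> simp [staggeredPoint]
  · refine ⟨by positivity, le_trans ?_ hwidth⟩
    gcongr
  · refine ⟨by positivity, le_trans ?_ hheight⟩
    gcongr
    nlinarith

end Staggered

/-- For every integer `k ≥ 4` there exist `k(k+1)` points in the closed unit square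
whose pairwise distances are all at least `(k² + 1) / (k (k² - k + √(2k)))`. -/
theorem stmt_6 (k : ℕ) (hk : 4 ≤ k) :
    ∃ f : Fin (k * (k + 1)) → EuclideanSpace ℝ (Fin 2),
      (∀ i t, f i t ∈ Set.Icc (0 : ℝ) 1) ∧
      ∀ i j, i ≠ j →
        ((k : ℝ) ^ 2 + 1) / ((k : ℝ) * ((k : ℝ) ^ 2 - k + Real.sqrt (2 * k))) ≤
          dist (f i) (f j) := by
  have hk4 : (4 : ℝ) ≤ k := by exact_mod_cast hk
  have hc := one_half_le_cosAlpha (by linarith : (1 : ℝ) ≤ k)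
  have hs0 := sinAlpha_nonneg (by linarith : (1 : ℝ) ≤ k)
  set m := ((k : ℝ) * cosAlpha k)⁻¹ with hm_def
  have hm : 0 < m := by positivity
  have hwidth : m * (k * cosAlpha k) = 1 := inv_mul_cancel₀ (by positivity)
  have hdiam : ((k : ℝ) ^ 2 + 1) / ((k : ℝ) * ((k : ℝ) ^ 2 - k + √(2 * k))) = m := by
    rw [hm_def, cosAlpha, mul_div_assoc', inv_div]
  let point (n : Fin (k * (k + 1))) : EuclideanSpace ℝ (Fin 2) :=
    let ij := finProdFinEquiv.symm n
    m • staggeredPoint (cosAlpha k) (sinAlpha k) ij.1 ij.2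
  refine ⟨point, fun n => ?_, fun n n' hne => ?_⟩
  · exact smul_staggeredPoint_mem_Icc hm.le (by linarith) hs0 (finProdFinEquiv.symm n).1.isLt
      (Nat.le_of_lt_succ (finProdFinEquiv.symm n).2.isLt) hwidth.le
      (by rw [← mul_cosAlpha, hwidth])
  · have hij := finProdFinEquiv.symm.injective.ne hne
    rw [hdiam, dist_smul₀, Real.norm_of_nonneg hm.le]
    refine le_mul_of_one_le_right hm.le (one_le_dist_staggeredPoint
      (cosAlpha_sq_add_sinAlpha_sq (by linarith)) hc hs0 (sinAlpha_le_one_half hk4) ?_)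
    intro h
    exact hij (Prod.ext (Fin.ext (congrArg Prod.fst h)) (Fin.ext (congrArg Prod.snd h)))
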